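/- arXiv:2108.04429 — 4 statements merged into one kernel-verified Lean document; each statement's English description precedes it below -/
import Mathlib

section
/- Let a_1,…,a_n ∈ ℝ^m be the pairwise orthogonal rows of A = Σ V^t (Σ diagonal nonnegative, V column orthonormal), B = n^{-1} Σ_i a_i a_i^t, and let i_j be a random index uniformly distributed on {1,…,n}, and N_j = B - a_{i_j} a_{i_j}^t. Then for any diagonal matrix D ∈ ℝ^{m×m} and any fixed vector v ∈ ℝ^m (both independent of i_j): E[‖V D V^t N_j v‖²] = (n-1) ‖V D V^t B v‖². -/
/-!
Write `u ℓ = S a ℓ` and `c ℓ = a ℓ ⬝ᵥ v`. Then `S B v` is the mean `w` of the vectors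
`x ℓ = c ℓ • u ℓ`, and `S (B - a ℓ a ℓᵀ) v = w - x ℓ`. The `u ℓ` are pairwise orthogonal, since
their Gram matrix `A Sᵀ S Aᵀ = Σ D² Σᵀ` is diagonal. For any family, the mean of `‖w - x ℓ‖²`
is the mean of `‖x ℓ‖²` minus `‖w‖²`; for an orthogonal family Pythagoras turns `∑ ‖x ℓ‖²`
into `‖∑ x ℓ‖² = n² ‖w‖²`, which gives the factor `n - 1`.
-/

open Matrix Finset

section InnerProductSpace

variable {E : Type*} [NormedAddCommGroup E] [InnerProductSpace ℝ E] {ι : Type*} [Fintype ι]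

open scoped RealInnerProductSpace

theorem norm_sum_sq_of_pairwise_inner_eq_zero {x : ι → E}
    (hx : Pairwise fun i j => ⟪x i, x j⟫ = 0) : ‖∑ i, x i‖ ^ 2 = ∑ i, ‖x i‖ ^ 2 := by
  classical
  rw [← real_inner_self_eq_norm_sq, sum_inner]
  refine Finset.sum_congr rfl fun i _ => ?_
  rw [inner_sum, Finset.sum_eq_single i (fun j _ hji => hx hji.symm) (by simp),
    real_inner_self_eq_norm_sq]

theorem sum_norm_mean_sub_sq (x : ι → E) :
    ∑ i, ‖(Fintype.card ι : ℝ)⁻¹ • ∑ j, x j - x i‖ ^ 2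
      = ∑ i, ‖x i‖ ^ 2 - Fintype.card ι * ‖(Fintype.card ι : ℝ)⁻¹ • ∑ j, x j‖ ^ 2 := by
  set n : ℝ := (Fintype.card ι : ℝ)
  set w := n⁻¹ • ∑ j, x j
  have hsum : ∑ j, x j = n • w := by
    rcases isEmpty_or_nonempty ι with _ | _
    · simp [w]
    · rw [smul_inv_smul₀ (by positivity)]
  simp only [norm_sub_sq_real, Finset.sum_add_distrib, Finset.sum_sub_distrib, ← inner_sum,
    ← Finset.mul_sum, hsum, inner_smul_right, real_inner_self_eq_norm_sq, Finset.sum_const,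
    Finset.card_univ, nsmul_eq_mul]
  ring

theorem inv_card_mul_sum_norm_mean_sub_sq {x : ι → E}
    (hx : Pairwise fun i j => ⟪x i, x j⟫ = 0) :
    (Fintype.card ι : ℝ)⁻¹ * ∑ i, ‖(Fintype.card ι : ℝ)⁻¹ • ∑ j, x j - x i‖ ^ 2
      = (Fintype.card ι - 1) * ‖(Fintype.card ι : ℝ)⁻¹ • ∑ j, x j‖ ^ 2 := by
  rw [sum_norm_mean_sub_sq, ← norm_sum_sq_of_pairwise_inner_eq_zero hx, norm_smul,
    mul_pow, Real.norm_eq_abs, sq_abs]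
  rcases isEmpty_or_nonempty ι with _ | _
  · simp
  · have : (Fintype.card ι : ℝ) ≠ 0 := by positivity
    field_simp

end InnerProductSpace

section Matrix

variable {R : Type*} [CommRing R] {ι κ : Type*} [Fintype κ]

theorem mulVec_row_dotProduct_mulVec_row (A : Matrix ι κ R) (M : Matrix κ κ R) (i j : ι) :
    (M *ᵥ A i) ⬝ᵥ (M *ᵥ A j) = (A * (Mᵀ * M) * Aᵀ) i j := by
  rw [dotProduct_comm, ← dotProduct_transpose_mulVec, mulVec_mulVec, dotProduct_mulVec,
    mul_apply']
  rfl

theorem mul_diagonal_mul_transpose_apply_of_ne [DecidableEq κ] {P : Matrix ι κ R}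
    (hP : Pairwise fun i j => ∀ k, P i k * P j k = 0) (d : κ → R) {i j : ι} (hij : i ≠ j) :
    (P * diagonal d * Pᵀ) i j = 0 := by
  rw [Matrix.mul_apply]
  simp only [mul_diagonal, transpose_apply]
  exact Finset.sum_eq_zero fun k _ => by rw [mul_right_comm, hP hij k, zero_mul]

theorem vecMulVec_self_mulVec (a v : κ → R) : vecMulVec a a *ᵥ v = (a ⬝ᵥ v) • a := by
  rw [vecMulVec_mulVec, op_smul_eq_smul]

end Matrix

theorem pairwise_rectangularDiagonal_mul_eq_zero {R : Type*} [MulZeroClass R] {n m : ℕ}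
    (σ : Fin n → R) :
    Pairwise fun i j => ∀ k : Fin m,
      (of fun (i : Fin n) (k : Fin m) => if (i : ℕ) = k then σ i else 0) i k *
        (of fun (i : Fin n) (k : Fin m) => if (i : ℕ) = k then σ i else 0) j k = 0 := by
  intro i j hij k
  simp only [of_apply]
  split_ifs with hi hj
  · exact absurd (Fin.ext (hi.trans hj.symm)) hij
  all_goals simp

theorem variance_identity_N_general (n m : ℕ)
    (V : Matrix (Fin m) (Fin m) ℝ) (hV : Vᵀ * V = 1)
    (σ : Fin n → ℝ)
    (D : Fin m → ℝ) (v : Fin m → ℝ)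
    (A : Matrix (Fin n) (Fin m) ℝ)
    (hA : A = (Matrix.of (fun (i : Fin n) (j : Fin m) => if (i : ℕ) = (j : ℕ) then σ i else 0)) * Vᵀ)
    (a : Fin n → Fin m → ℝ) (ha : ∀ i k, a i k = A i k)
    (B : Matrix (Fin m) (Fin m) ℝ)
    (hB : B = ((n : ℝ)⁻¹) • ∑ i : Fin n, vecMulVec (a i) (a i))
    (S : Matrix (Fin m) (Fin m) ℝ) (hS : S = V * diagonal D * Vᵀ) :
    ((n : ℝ)⁻¹) * ∑ ℓ : Fin n,
        (∑ k, (S.mulVec ((B - vecMulVec (a ℓ) (a ℓ)).mulVec v) k) ^ 2)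
      = ((n : ℝ) - 1) * ∑ k, (S.mulVec (B.mulVec v) k) ^ 2 := by
  obtain rfl : A = a := (funext fun i => funext (ha i)).symm
  set P : Matrix (Fin n) (Fin m) ℝ := of fun i j => if (i : ℕ) = j then σ i else 0
  have hGram : A * (Sᵀ * S) * Aᵀ = P * (diagonal D * diagonal D) * Pᵀ := by
    have hV' : ∀ {k : ℕ} (X : Matrix (Fin m) (Fin k) ℝ), Vᵀ * (V * X) = X := fun X => by
      rw [← Matrix.mul_assoc, hV, Matrix.one_mul]
    simp only [hA, hS, transpose_mul, transpose_transpose, diagonal_transpose, Matrix.mul_assoc,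
      hV']
  have horth : Pairwise fun i j => (S *ᵥ A i) ⬝ᵥ (S *ᵥ A j) = 0 := fun i j hij => by
    beta_reduce
    rw [mulVec_row_dotProduct_mulVec_row, hGram, diagonal_mul_diagonal]
    exact mul_diagonal_mul_transpose_apply_of_ne (pairwise_rectangularDiagonal_mul_eq_zero σ) _ hij
  have hBv : S *ᵥ (B *ᵥ v) = (n : ℝ)⁻¹ • ∑ ℓ, (A ℓ ⬝ᵥ v) • S *ᵥ A ℓ := by
    simp only [hB, smul_mulVec, sum_mulVec, vecMulVec_self_mulVec, mulVec_smul, mulVec_sum]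
  have hNv : ∀ ℓ, S *ᵥ ((B - vecMulVec (A ℓ) (A ℓ)) *ᵥ v)
      = S *ᵥ (B *ᵥ v) - (A ℓ ⬝ᵥ v) • S *ᵥ A ℓ := fun ℓ => by
    rw [sub_mulVec, mulVec_sub, vecMulVec_self_mulVec, mulVec_smul]
  have hvar := inv_card_mul_sum_norm_mean_sub_sq
    (x := fun ℓ => WithLp.toLp 2 ((A ℓ ⬝ᵥ v) • S *ᵥ A ℓ)) fun i j hij => by
      simp only [EuclideanSpace.inner_toLp_toLp, star_trivial, dotProduct_smul, smul_dotProduct,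
        horth hij.symm, smul_zero]
  simp only [Fintype.card_fin, ← WithLp.toLp_sum, ← WithLp.toLp_smul, ← WithLp.toLp_sub,
    EuclideanSpace.real_norm_sq_eq] at hvar
  simpa only [hNv, hBv] using hvar

/-- Variance identity.  Let `a_1,…,a_n ∈ ℝ^m` be the pairwise orthogonal rows of
`A = Σ Vᵗ` (`Σ` diagonal nonnegative, `V` orthogonal), `B = n⁻¹ Σ_i a_i a_iᵗ`,
and `N_j = B - a_{i_j} a_{i_j}ᵗ` with `i_j` uniform on `{1,…,n}`.  Then for any
diagonal `D` and fixed `v ∈ ℝ^m`: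
`E[‖V D Vᵗ N_j v‖²] = (n-1) ‖V D Vᵗ B v‖²`,
the expectation being the uniform average over the index. -/
theorem variance_identity_N (n m : ℕ) (hn : 0 < n)
    (V : Matrix (Fin m) (Fin m) ℝ) (hV : Vᵀ * V = 1)
    (σ : Fin n → ℝ) (hσ : ∀ i, 0 ≤ σ i)
    (D : Fin m → ℝ) (v : Fin m → ℝ)
    (A : Matrix (Fin n) (Fin m) ℝ)
    (hA : A = (Matrix.of (fun (i : Fin n) (j : Fin m) => if (i : ℕ) = (j : ℕ) then σ i else 0)) * Vᵀ)
    (a : Fin n → Fin m → ℝ) (ha : ∀ i k, a i k = A i k)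
    (B : Matrix (Fin m) (Fin m) ℝ)
    (hB : B = ((n : ℝ)⁻¹) • ∑ i : Fin n, vecMulVec (a i) (a i))
    (S : Matrix (Fin m) (Fin m) ℝ) (hS : S = V * diagonal D * Vᵀ) :
    ((n : ℝ)⁻¹) * ∑ ℓ : Fin n,
        (∑ k, (S.mulVec ((B - vecMulVec (a ℓ) (a ℓ)).mulVec v) k) ^ 2)
      = ((n : ℝ) - 1) * ∑ k, (S.mulVec (B.mulVec v) k) ^ 2 :=
  variance_identity_N_general n m V hV σ D v A hA a ha B hB S hS
end

section
/- For SVRG applied to a linear inverse problem, the epoch error satisfies the exact recursion e_{(K+1)M}^δ = (M_0^M − L_K B) e_{KM}^δ + (c_0 Σ_{i=0}^{M-1} M_0^i + L_K) ζ, where L_K = c_0 Σ_{i=1}^{M-1} H_{KM+i}(I − M_0^i) B^{-1}. -/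
/-!
Compare the SVRG errors `e_j` of the epoch with the Landweber errors `f_j`, which follow
`f_{j+1} = M₀ f_j + c₀ ζ` from `f_0 = e_0`. Since `P_k = M₀ + c₀ N_k`, the difference
`d_j = e_j - f_j` obeys `d_{j+1} = P_j d_j + c₀ N_j (f_j - e_0)` with `d_1 = 0`, and unrolling this
with the products `G` gives `d_M = c₀ Σ_j H_j (f_j - e_0)`. Finally
`f_j - e_0 = (I - M₀^j) B⁻¹ (ζ - B e_0)` by the geometric sum `c₀ (Σ_{i<j} M₀^i) B = I - M₀^j`.
-/

open Matrix Finset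

section AffineRecurrence

variable {ι R : Type*} [Fintype ι] [DecidableEq ι] [Ring R]

theorem mulVec_eq_of_affine_recurrence {p g : ℕ → Matrix ι ι R} {x v : ℕ → ι → R} {s M : ℕ}
    (hsM : s ≤ M) (hg_top : g M = 1) (hg : ∀ j, s ≤ j → j < M → g j = g (j + 1) * p j)
    (hx : ∀ j, s ≤ j → j < M → x (j + 1) = p j *ᵥ x j + v j) :
    x M = g s *ᵥ x s + ∑ j ∈ Ico s M, g (j + 1) *ᵥ v j := by
  -- `g j *ᵥ x j` telescopes
  have step : ∀ j ∈ Ico s M, g (j + 1) *ᵥ x (j + 1) - g j *ᵥ x j = g (j + 1) *ᵥ v j := by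
    intro j hj
    obtain ⟨hsj, hjM⟩ := mem_Ico.mp hj
    rw [hx j hsj hjM, hg j hsj hjM, mulVec_add, ← mulVec_mulVec, add_sub_cancel_left]
  rw [← sum_congr rfl step, sum_Ico_sub (fun j => g j *ᵥ x j) hsM, hg_top, one_mulVec,
    add_sub_cancel]

end AffineRecurrence

theorem smul_geom_sum_mul_eq_one_sub_pow {𝕜 α : Type*} [CommRing 𝕜] [Ring α] [Algebra 𝕜 α]
    {A B : α} {c : 𝕜} (hA : A = 1 - c • B) (j : ℕ) :
    (c • ∑ i ∈ range j, A ^ i) * B = 1 - A ^ j := by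
  rw [smul_mul_assoc, ← mul_smul_comm, ← sub_sub_cancel 1 (c • B), ← hA, geom_sum_mul_neg]

section Landweber

variable {ι R : Type*} [Fintype ι] [DecidableEq ι]

/-- Closed form of the iteration `y_{j+1} = A y_j + c ζ`, `y_0 = x`. -/
def landweberIterate [CommSemiring R] (A : Matrix ι ι R) (c : R) (x ζ : ι → R) (j : ℕ) : ι → R :=
  A ^ j *ᵥ x + (c • ∑ i ∈ range j, A ^ i) *ᵥ ζ

@[simp]
theorem landweberIterate_zero [CommSemiring R] (A : Matrix ι ι R) (c : R) (x ζ : ι → R) :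
    landweberIterate A c x ζ 0 = x := by
  simp [landweberIterate]

theorem landweberIterate_succ [CommSemiring R] (A : Matrix ι ι R) (c : R) (x ζ : ι → R) (j : ℕ) :
    landweberIterate A c x ζ (j + 1) = A *ᵥ landweberIterate A c x ζ j + c • ζ := by
  simp only [landweberIterate, geom_sum_succ, pow_succ', smul_add, add_mulVec, mulVec_add,
    mulVec_mulVec, smul_mulVec, mulVec_smul, one_mulVec]
  abel

theorem landweberIterate_sub_start [CommRing R] {A B : Matrix ι ι R} {c : R} (hA : A = 1 - c • B)
    (hB : IsUnit B.det) (x ζ : ι → R) (j : ℕ) :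
    landweberIterate A c x ζ j - x = ((1 - A ^ j) * B⁻¹) *ᵥ (ζ - B *ᵥ x) := by
  have hgeom := smul_geom_sum_mul_eq_one_sub_pow hA j
  rw [← hgeom, mul_nonsing_inv_cancel_right B _ hB, mulVec_sub, mulVec_mulVec, hgeom,
    landweberIterate, sub_mulVec, one_mulVec]
  abel

end Landweber

theorem svrg_step_sub_landweber_step {ι R : Type*} [Fintype ι] [CommRing R]
    {A P N : Matrix ι ι R} {c : R} (hP : P = A + c • N) (x x₀ y ζ : ι → R) :
    (P *ᵥ x - c • N *ᵥ x₀ + c • ζ) - (A *ᵥ y + c • ζ) = P *ᵥ (x - y) + c • N *ᵥ (y - x₀) := by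
  simp only [hP, add_mulVec, smul_mulVec, mulVec_sub]
  module

theorem svrg_epoch_recursion_general (n m K M : ℕ)
    (a : Fin n → Fin m → ℝ) (c₀ : ℝ)
    (idx : ℕ → Fin n) (ζ : Fin m → ℝ)
    (B M₀ : Matrix (Fin m) (Fin m) ℝ) (P N G H : ℕ → Matrix (Fin m) (Fin m) ℝ)
    (hBinv : IsUnit B.det)
    (hM₀ : M₀ = 1 - c₀ • B)
    (hP : ∀ k, P k = 1 - c₀ • vecMulVec (a (idx k)) (a (idx k)))
    (hN : ∀ k, N k = B - vecMulVec (a (idx k)) (a (idx k)))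
    (hGtop : G (K * M + M) = 1)
    (hG : ∀ j, 1 ≤ j → j < M → G (K * M + j) = G (K * M + j + 1) * P (K * M + j))
    (hH : ∀ k, H k = G (k + 1) * N k)
    (e : ℕ → Fin m → ℝ)
    (hrec : ∀ k, K * M ≤ k → k < K * M + M →
      e (k + 1) = (P k).mulVec (e k) - c₀ • (N k).mulVec (e (K * M)) + c₀ • ζ) :
    e (K * M + M) =
      (M₀ ^ M - (c₀ • ∑ i ∈ Ico 1 M, H (K * M + i) * (1 - M₀ ^ i) * B⁻¹) * B).mulVec
          (e (K * M))
        + ((c₀ • ∑ i ∈ range M, M₀ ^ i)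
            + c₀ • ∑ i ∈ Ico 1 M, H (K * M + i) * (1 - M₀ ^ i) * B⁻¹).mulVec ζ := by
  obtain rfl | hM := M.eq_zero_or_pos
  · simp
  set e₀ := e (K * M)
  set L := c₀ • ∑ i ∈ Ico 1 M, H (K * M + i) * (1 - M₀ ^ i) * B⁻¹
  set f := landweberIterate M₀ c₀ e₀ ζ
  have hf_succ : ∀ j, f (j + 1) = M₀ *ᵥ f j + c₀ • ζ := landweberIterate_succ M₀ c₀ e₀ ζ
  have hf_sub : ∀ j, f j - e₀ = ((1 - M₀ ^ j) * B⁻¹) *ᵥ (ζ - B *ᵥ e₀) :=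
    landweberIterate_sub_start hM₀ hBinv e₀ ζ
  have hPN : ∀ k, P k = M₀ + c₀ • N k := fun k => by rw [hP, hN, hM₀]; module
  have hdiff : ∀ j, j < M → e (K * M + j + 1) - f (j + 1)
      = P (K * M + j) *ᵥ (e (K * M + j) - f j) + c₀ • N (K * M + j) *ᵥ (f j - e₀) := fun j hj => by
    rw [hrec (K * M + j) (by omega) (by omega), hf_succ, svrg_step_sub_landweber_step (hPN _)]
  have hdiff₁ : e (K * M + 1) - f 1 = 0 := by
    rw [hdiff 0 hM]
    simp [f, e₀]
  have unrolled := mulVec_eq_of_affine_recurrence (s := 1) (g := fun j => G (K * M + j))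
    (x := fun j => e (K * M + j) - f j) (v := fun j => c₀ • N (K * M + j) *ᵥ (f j - e₀))
    hM hGtop hG fun j _ hj => hdiff j hj
  have hGN : ∀ j, G (K * M + (j + 1)) * N (K * M + j) = H (K * M + j) := fun j => (hH _).symm
  have hsum : ∑ j ∈ Ico 1 M, G (K * M + (j + 1)) *ᵥ c₀ • N (K * M + j) *ᵥ (f j - e₀)
      = L *ᵥ (ζ - B *ᵥ e₀) := by
    simp only [L, hf_sub, mulVec_smul, mulVec_mulVec, ← mul_assoc, hGN]
    simp only [smul_mulVec, sum_mulVec, smul_sum]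
  simp only [hdiff₁, mulVec_zero, zero_add, hsum, sub_eq_iff_eq_add'] at unrolled
  rw [unrolled]
  simp only [f, landweberIterate, sub_mulVec, add_mulVec, mulVec_sub, mulVec_mulVec]
  abel

/-- SVRG epoch recursion.  With `B = n⁻¹ AᵗA` invertible, `M₀ = I - c₀ B`,
`ζ = n⁻¹ Aᵗ ξ`, per-step operators `P k = I - c₀ a_{i_k} a_{i_k}ᵗ`,
`N k = B - a_{i_k} a_{i_k}ᵗ`, SVRG error recursion
`e_{k+1} = P_k e_k - c₀ N_k e_{KM} + c₀ ζ` within epoch `K`, and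
`G`, `H` the partial products `G (KM+M) = I`, `G k = G (k+1) P k`,
`H k = G (k+1) N k`, assuming the commuting property of `M₀, B, P_k, N_k`,
the epoch error satisfies
`e_{(K+1)M} = (M₀^M − L_K B) e_{KM} + (c₀ Σ_{i<M} M₀^i + L_K) ζ`
with `L_K = c₀ Σ_{i=1}^{M-1} H_{KM+i}(I − M₀^i) B⁻¹`. -/
theorem svrg_epoch_recursion (n m K M : ℕ) (hn : 0 < n) (hM : 0 < M)
    (a : Fin n → Fin m → ℝ) (c₀ : ℝ) (hc₀ : 0 < c₀)
    (idx : ℕ → Fin n) (ζ : Fin m → ℝ)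
    (B M₀ : Matrix (Fin m) (Fin m) ℝ) (P N G H : ℕ → Matrix (Fin m) (Fin m) ℝ)
    (hB : B = ((n : ℝ)⁻¹) • ∑ i : Fin n, vecMulVec (a i) (a i))
    (hBinv : IsUnit B.det)
    (hM₀ : M₀ = 1 - c₀ • B)
    (hP : ∀ k, P k = 1 - c₀ • vecMulVec (a (idx k)) (a (idx k)))
    (hN : ∀ k, N k = B - vecMulVec (a (idx k)) (a (idx k)))
    (hcomm : ∀ k k', Commute M₀ (P k) ∧ Commute M₀ (N k) ∧ Commute B (P k) ∧
      Commute B (N k) ∧ Commute (P k) (P k') ∧ Commute (P k) (N k') ∧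
      Commute (N k) (N k'))
    (hGtop : G (K * M + M) = 1)
    (hG : ∀ j, 1 ≤ j → j < M → G (K * M + j) = G (K * M + j + 1) * P (K * M + j))
    (hH : ∀ k, H k = G (k + 1) * N k)
    (e : ℕ → Fin m → ℝ)
    (hrec : ∀ k, K * M ≤ k → k < K * M + M →
      e (k + 1) = (P k).mulVec (e k) - c₀ • (N k).mulVec (e (K * M)) + c₀ • ζ) :
    e (K * M + M) =
      (M₀ ^ M - (c₀ • ∑ i ∈ Ico 1 M, H (K * M + i) * (1 - M₀ ^ i) * B⁻¹) * B).mulVec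
          (e (K * M))
        + ((c₀ • ∑ i ∈ range M, M₀ ^ i)
            + c₀ • ∑ i ∈ Ico 1 M, H (K * M + i) * (1 - M₀ ^ i) * B⁻¹).mulVec ζ :=
  svrg_epoch_recursion_general n m K M a c₀ idx ζ B M₀ P N G H hBinv hM₀ hP hN hGtop hG hH e hrec
end

section
/- For SVRG with constant step size c_0 applied to a linear inverse problem, the expected error at epoch K satisfies E[e_{KM}^δ] = M_0^{KM} e_0^δ + (I − M_0^{KM}) B^{-1} ζ, for every K ≥ 1. -/
open Matrix Finset
open scoped BigOperators

/-!
The index drawn at step `k` is independent of the current error and of the snapshot error, since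
both depend only on earlier indices. Averaging over it therefore replaces `P_{i_k}` by its mean `B`
in both places, the variance-reduction terms cancel, and the mean error follows the deterministic
Landweber recursion `E[e_{k+1}] = M₀ E[e_k] + c₀ ζ`. Its solution is
`M₀^k e₀ + c₀ Σ_{i<k} M₀^i ζ`, and `c₀ Σ_{i<k} M₀^i = (I - M₀^k) B⁻¹` because `I - M₀ = c₀ B`.
-/

theorem Finset.expect_eq_inv_card_smul_sum {ι 𝕜 V : Type*} [DivisionSemiring 𝕜] [CharZero 𝕜]
    [AddCommMonoid V] [Module 𝕜 V] [Module ℚ≥0 V] [IsScalarTower ℚ≥0 𝕜 V] (s : Finset ι)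
    (f : ι → V) : 𝔼 i ∈ s, f i = ((#s : 𝕜)⁻¹) • ∑ i ∈ s, f i := by
  rw [expect, ← NNRat.cast_smul_eq_nnqsmul 𝕜]
  push_cast; rfl

theorem Matrix.mulVec_expect {ι l d 𝕜 : Type*} [Semifield 𝕜] [CharZero 𝕜] [Fintype d]
    (A : Matrix l d 𝕜) (s : Finset ι) (v : ι → d → 𝕜) :
    A *ᵥ 𝔼 i ∈ s, v i = 𝔼 i ∈ s, A *ᵥ v i := by
  simp only [expect, mulVec_sum, ← NNRat.cast_smul_eq_nnqsmul 𝕜, mulVec_smul]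

theorem Matrix.expect_mulVec {ι l d 𝕜 : Type*} [Semifield 𝕜] [CharZero 𝕜] [Fintype d]
    (A : ι → Matrix l d 𝕜) (s : Finset ι) (v : d → 𝕜) :
    (𝔼 i ∈ s, A i) *ᵥ v = 𝔼 i ∈ s, A i *ᵥ v := by
  simp only [expect, sum_mulVec, ← NNRat.cast_smul_eq_nnqsmul 𝕜, smul_mulVec]

theorem Fintype.expect_apply_eval_eq_expect_expect {κ ι W X : Type*} [Fintype κ] [DecidableEq κ]
    [Fintype ι] [AddCommMonoid X] [Module ℚ≥0 X] (p : κ) {g : (κ → ι) → W}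
    (hg : ∀ f f', (∀ j ≠ p, f j = f' j) → g f = g f') (Φ : ι → W → X) :
    𝔼 f, Φ (f p) (g f) = 𝔼 f, 𝔼 i, Φ i (g f) := by
  rcases isEmpty_or_nonempty ι with hι | hι
  · have : IsEmpty (κ → ι) := ⟨fun f => hι.false (f p)⟩
    simp
  set σ := (Equiv.funSplitAt p ι).symm
  have hσp : ∀ x h, σ (x, h) p = x := fun x h => by simp [σ, Equiv.funSplitAt_symm_apply]
  have hgσ : ∀ x y h, g (σ (x, h)) = g (σ (y, h)) := fun x y h =>
    hg _ _ fun j hj => by simp [σ, Equiv.funSplitAt_symm_apply, hj]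
  rw [← Fintype.expect_equiv σ _ _ (fun _ => rfl),
    ← Fintype.expect_equiv σ (fun q => 𝔼 i, Φ i (g (σ q))) _ (fun _ => rfl),
    ← univ_product_univ, expect_product, expect_product]
  simp only [hσp]
  calc 𝔼 x, 𝔼 h, Φ x (g (σ (x, h))) = 𝔼 _y : ι, 𝔼 h, 𝔼 x, Φ x (g (σ (x, h))) := by
        rw [Fintype.expect_const, expect_comm]
    _ = 𝔼 y, 𝔼 h, 𝔼 i, Φ i (g (σ (y, h))) := by
        simp only [hgσ _ (Classical.arbitrary ι)]

theorem Matrix.eq_pow_mulVec_add_geom_sum_mulVec {R d : Type*} [CommSemiring R] [Fintype d]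
    [DecidableEq d] (A : Matrix d d R) (b : d → R) {x : ℕ → d → R} {N : ℕ}
    (h : ∀ k < N, x (k + 1) = A *ᵥ x k + b) :
    x N = (A ^ N) *ᵥ x 0 + (∑ i ∈ range N, A ^ i) *ᵥ b := by
  induction N with
  | zero => simp
  | succ N ih =>
    rw [h N N.lt_succ_self, ih fun k hk => h k (hk.trans N.lt_succ_self), mulVec_add,
      mulVec_mulVec, mulVec_mulVec, pow_succ', geom_sum_succ, add_mulVec, one_mulVec,
      add_assoc]

theorem Matrix.smul_geom_sum_one_sub_smul {R d : Type*} [CommRing R] [Fintype d] [DecidableEq d]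
    (c : R) {B : Matrix d d R} (hB : IsUnit B.det) (N : ℕ) :
    c • ∑ i ∈ range N, (1 - c • B) ^ i = (1 - (1 - c • B) ^ N) * B⁻¹ := by
  rw [← geom_sum_mul_neg, sub_sub_cancel, mul_smul_comm, smul_mul_assoc, mul_assoc,
    mul_nonsing_inv B hB, mul_one]

theorem eq_of_forall_lt_eq_of_rec {ι α : Type*} {e : (ℕ → ι) → ℕ → α} {x₀ : α}
    (F : ι → α → α → α) {anchor : ℕ → ℕ} (hanchor : ∀ k, anchor k ≤ k)
    (h0 : ∀ idx, e idx 0 = x₀)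
    (hrec : ∀ idx k, e idx (k + 1) = F (idx k) (e idx k) (e idx (anchor k)))
    (k : ℕ) {idx idx' : ℕ → ι} (h : ∀ j < k, idx j = idx' j) : e idx k = e idx' k := by
  induction k using Nat.strong_induction_on with
  | _ k ih =>
    cases k with
    | zero => rw [h0, h0]
    | succ k =>
      have hle : ∀ {j}, j ≤ k → ∀ l < j, idx l = idx' l := fun hj l hl => h l (by omega)
      rw [hrec, hrec, h k k.lt_succ_self, ih k k.lt_succ_self (hle le_rfl),
        ih (anchor k) (Nat.lt_succ_of_le (hanchor k)) (hle (hanchor k))]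

def padIndices {ι : Type*} {N : ℕ} (f : Fin N → ι) (i₀ : ι) : ℕ → ι :=
  fun k => if h : k < N then f ⟨k, h⟩ else i₀

section SVRG

variable {ι d : Type*} [Fintype d] [DecidableEq d]

/-- `u` is the current error and `v` the error at the last snapshot. -/
def svrgStep (P : ι → Matrix d d ℝ) (B : Matrix d d ℝ) (c₀ : ℝ) (ζ : d → ℝ) (i : ι)
    (u v : d → ℝ) : d → ℝ :=
  (1 - c₀ • P i) *ᵥ u - c₀ • (B - P i) *ᵥ v + c₀ • ζ

theorem expect_svrg_succ [Fintype ι] {N : ℕ} (i₀ : ι) {P : ι → Matrix d d ℝ} {B : Matrix d d ℝ}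
    (hB : B = 𝔼 i, P i) {c₀ : ℝ} {ζ x₀ : d → ℝ} {anchor : ℕ → ℕ} (hanchor : ∀ k, anchor k ≤ k)
    {e : (ℕ → ι) → ℕ → d → ℝ} (h0 : ∀ idx, e idx 0 = x₀)
    (hrec : ∀ idx k, e idx (k + 1) = svrgStep P B c₀ ζ (idx k) (e idx k) (e idx (anchor k)))
    {k : ℕ} (hk : k < N) :
    𝔼 f : Fin N → ι, e (padIndices f i₀) (k + 1)
      = (1 - c₀ • B) *ᵥ 𝔼 f : Fin N → ι, e (padIndices f i₀) k + c₀ • ζ := by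
  have : Nonempty ι := ⟨i₀⟩
  set E := fun j => 𝔼 f : Fin N → ι, e (padIndices f i₀) j
  have hpad : ∀ f : Fin N → ι, padIndices f i₀ k = f ⟨k, hk⟩ := fun f => dif_pos hk
  -- the index drawn at step `k` is independent of the errors up to step `k`
  have hindep : ∀ j ≤ k, 𝔼 f : Fin N → ι, P (f ⟨k, hk⟩) *ᵥ e (padIndices f i₀) j = B *ᵥ E j := by
    intro j hj
    rw [Fintype.expect_apply_eval_eq_expect_expect ⟨k, hk⟩ (g := fun f => e (padIndices f i₀) j)
      ?_ (fun i v => P i *ᵥ v)]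
    · simp only [← expect_mulVec, ← hB, mulVec_expect, E]
    · intro f f' hff'
      refine eq_of_forall_lt_eq_of_rec _ hanchor h0 hrec j fun l hl => ?_
      have hlN : l < N := by omega
      simp only [padIndices, dif_pos hlN]
      exact hff' _ (by simp [Fin.ext_iff]; omega)
  calc E (k + 1) = 𝔼 f : Fin N → ι, (e (padIndices f i₀) k
        - c₀ • P (f ⟨k, hk⟩) *ᵥ e (padIndices f i₀) k
        - c₀ • (B *ᵥ e (padIndices f i₀) (anchor k)
          - P (f ⟨k, hk⟩) *ᵥ e (padIndices f i₀) (anchor k))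
        + c₀ • ζ) := by
        refine expect_congr rfl fun f _ => ?_
        rw [hrec, svrgStep, hpad, sub_mulVec, one_mulVec, smul_mulVec, sub_mulVec, smul_sub]
    _ = E k - c₀ • B *ᵥ E k - c₀ • (B *ᵥ E (anchor k) - B *ᵥ E (anchor k)) + c₀ • ζ := by
        simp only [expect_add_distrib, expect_sub_distrib, ← smul_expect, ← mulVec_expect,
          hindep k le_rfl, hindep _ (hanchor k), Fintype.expect_const, E]
    _ = (1 - c₀ • B) *ᵥ E k + c₀ • ζ := by
        rw [sub_self, smul_zero, sub_zero, sub_mulVec, one_mulVec, smul_mulVec]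

end SVRG

theorem svrg_expected_error_general (n m K M : ℕ) (hn : 0 < n)
    (a : Fin n → Fin m → ℝ) (c₀ : ℝ)
    (ζ e₀ : Fin m → ℝ)
    (B M₀ : Matrix (Fin m) (Fin m) ℝ)
    (hB : B = ((n : ℝ)⁻¹) • ∑ i : Fin n, vecMulVec (a i) (a i))
    (hBinv : IsUnit B.det)
    (hM₀ : M₀ = 1 - c₀ • B)
    (e : (ℕ → Fin n) → ℕ → (Fin m → ℝ))
    (h0 : ∀ idx, e idx 0 = e₀)
    (hrec : ∀ idx k, e idx (k + 1) =
      (1 - c₀ • vecMulVec (a (idx k)) (a (idx k))).mulVec (e idx k)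
        - c₀ • (B - vecMulVec (a (idx k)) (a (idx k))).mulVec (e idx (M * (k / M)))
        + c₀ • ζ) :
    (((n : ℝ) ^ (K * M))⁻¹) •
        ∑ f : Fin (K * M) → Fin n,
          e (fun k => if h : k < K * M then f ⟨k, h⟩ else ⟨0, hn⟩) (K * M)
      = (M₀ ^ (K * M)).mulVec e₀ + ((1 - M₀ ^ (K * M)) * B⁻¹).mulVec ζ := by
  have : Nonempty (Fin n) := ⟨⟨0, hn⟩⟩
  set E : ℕ → Fin m → ℝ := fun k => 𝔼 f : Fin (K * M) → Fin n, e (padIndices f ⟨0, hn⟩) k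
  have hB' : B = 𝔼 i, vecMulVec (a i) (a i) := by
    rw [hB, expect_eq_inv_card_smul_sum (𝕜 := ℝ), card_univ, Fintype.card_fin]
  have hE : ∀ k < K * M, E (k + 1) = M₀ *ᵥ E k + c₀ • ζ := fun k hk => by
    rw [hM₀]
    exact expect_svrg_succ _ hB' (fun k => Nat.mul_div_le k M) h0 hrec hk
  have hE0 : E 0 = e₀ := by simp only [E, h0, Fintype.expect_const]
  calc _ = E (K * M) := by
        simp only [E]
        rw [expect_eq_inv_card_smul_sum (𝕜 := ℝ), card_univ, Fintype.card_fun, Fintype.card_fin,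
          Fintype.card_fin, Nat.cast_pow]
        rfl
    _ = (M₀ ^ (K * M)) *ᵥ e₀ + (c₀ • ∑ i ∈ range (K * M), M₀ ^ i) *ᵥ ζ := by
        rw [eq_pow_mulVec_add_geom_sum_mulVec M₀ (c₀ • ζ) hE, hE0, mulVec_smul, smul_mulVec]
    _ = _ := by rw [hM₀, smul_geom_sum_one_sub_smul c₀ hBinv]

/-- SVRG bias formula.  With `B = n⁻¹ Σ_i a_i a_iᵗ` invertible, `M₀ = I − c₀B`,
`ζ = n⁻¹ Aᵗξ`, i.i.d. uniform indices, and SVRG error recursion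
`e_{k+1} = P_k e_k − c₀ N_k e_{k_M} + c₀ ζ` (anchor `k_M = ⌊k/M⌋M`), the
expected epoch error satisfies
`E[e_{KM}] = M₀^{KM} e_0 + (I − M₀^{KM}) B⁻¹ ζ` for every `K ≥ 1`;
the expectation is the uniform average over the `KM` indices used. -/
theorem svrg_expected_error (n m K M : ℕ) (hn : 0 < n) (hM : 0 < M) (hK : 1 ≤ K)
    (a : Fin n → Fin m → ℝ) (c₀ : ℝ) (hc₀ : 0 < c₀)
    (ξ : Fin n → ℝ) (ζ e₀ : Fin m → ℝ)
    (B M₀ : Matrix (Fin m) (Fin m) ℝ)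
    (hB : B = ((n : ℝ)⁻¹) • ∑ i : Fin n, vecMulVec (a i) (a i))
    (hBinv : IsUnit B.det)
    (hM₀ : M₀ = 1 - c₀ • B)
    (hζ : ζ = ((n : ℝ)⁻¹) • ∑ i : Fin n, ξ i • a i)
    (e : (ℕ → Fin n) → ℕ → (Fin m → ℝ))
    (h0 : ∀ idx, e idx 0 = e₀)
    (hrec : ∀ idx k, e idx (k + 1) =
      (1 - c₀ • vecMulVec (a (idx k)) (a (idx k))).mulVec (e idx k)
        - c₀ • (B - vecMulVec (a (idx k)) (a (idx k))).mulVec (e idx (M * (k / M)))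
        + c₀ • ζ) :
    (((n : ℝ) ^ (K * M))⁻¹) •
        ∑ f : Fin (K * M) → Fin n,
          e (fun k => if h : k < K * M then f ⟨k, h⟩ else ⟨0, hn⟩) (K * M)
      = (M₀ ^ (K * M)).mulVec e₀ + ((1 - M₀ ^ (K * M)) * B⁻¹).mulVec ζ :=
  svrg_expected_error_general n m K M hn a c₀ ζ e₀ B M₀ hB hBinv hM₀ e h0 hrec
end

section
/- Let B be symmetric positive definite with c_0‖B‖ ≤ 1 and M_0 = I − c_0B. Then Σ_{j=0}^{K} ‖M_0^{(K−j)M/2} B‖² ≤ (4 + 2(Mc_0‖B‖)²) c_0^{-2} M^{-2}, for every integer K ≥ 0 and positive integer M. -/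
open Matrix Finset
open scoped Matrix.Norms.L2Operator

section
open scoped ComplexOrder
noncomputable def Matrix.PosSemidef.sqrt {n 𝕜 : Type*} [Fintype n] [RCLike 𝕜] [DecidableEq n]
    {A : Matrix n n 𝕜} (hA : A.PosSemidef) : Matrix n n 𝕜 :=
  (hA.1.eigenvectorUnitary : Matrix n n 𝕜) * diagonal ((↑) ∘ Real.sqrt ∘ hA.1.eigenvalues) *
    (star hA.1.eigenvectorUnitary : Matrix n n 𝕜)
end

/-!
The matrix `M₀^{q/2} B` is the function `x ↦ (1 - c₀ x)^{q/2} x` of `B`, so by the isometric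
functional calculus its spectral norm is the maximum of that function over the spectrum of `B`,
which lies in `[0, ‖B‖]`. There it is at most `‖B‖`, and at most `2 / (q c₀)` because
`(1 - t)^{q/2} ≤ e^{-qt/2}` and `y e^{-y/2} ≤ 2`. Using the first bound for `K - j ≤ 1` and the
second otherwise, the sum is at most `2‖B‖² + 4 (c₀ M)⁻² ∑_{k ≥ 2} k⁻²`, and `∑_{k ≥ 2} k⁻² ≤ 1`.
-/

theorem nat_mul_mul_sqrt_one_sub_pow_le_two {t : ℝ} (ht : t ≤ 1) (q : ℕ) :
    q * t * √((1 - t) ^ q) ≤ 2 := by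
  have hdecay : √((1 - t) ^ q) ≤ Real.exp (-(q * t / 2)) := by
    rw [Real.sqrt_le_iff]
    refine ⟨(Real.exp_pos _).le, ?_⟩
    calc (1 - t) ^ q ≤ Real.exp (-t) ^ q :=
          pow_le_pow_left₀ (by linarith) (Real.one_sub_le_exp_neg t) q
      _ = Real.exp (-(q * t / 2)) ^ 2 := by
          rw [← Real.exp_nat_mul, ← Real.exp_nat_mul]
          push_cast
          ring_nf
  have hlinear : q * t ≤ 2 * Real.exp (q * t / 2) := by
    linarith [Real.add_one_le_exp (q * t / 2)]
  calc q * t * √((1 - t) ^ q) ≤ 2 * Real.exp (q * t / 2) * Real.exp (-(q * t / 2)) := by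
        gcongr
    _ = 2 := by rw [mul_assoc, ← Real.exp_add, add_neg_cancel, Real.exp_zero, mul_one]

theorem Finset.sum_range_le_two_mul_add_of_le_div_sq {f : ℕ → ℝ} {b C : ℝ} (hf : ∀ k, 0 ≤ f k)
    (hsmall : ∀ k ≤ 1, f k ≤ b) (hlarge : ∀ k, 2 ≤ k → f k ≤ C / k ^ 2) (hC : 0 ≤ C) (n : ℕ) :
    ∑ k ∈ range n, f k ≤ 2 * b + C := by
  have hcover : range n ⊆ range 2 ∪ Ioo 1 n := by
    intro k
    simp only [mem_range, mem_union, mem_Ioo]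
    omega
  have hdisj : Disjoint (range 2) (Ioo 1 n) := by
    rw [Finset.disjoint_left]
    intro k
    simp only [mem_range, mem_Ioo]
    omega
  have htail : ∑ k ∈ Ioo 1 n, f k ≤ C := by
    calc ∑ k ∈ Ioo 1 n, f k ≤ ∑ k ∈ Ioo 1 n, C * ((k : ℝ) ^ 2)⁻¹ :=
          Finset.sum_le_sum fun k hk => (hlarge k (mem_Ioo.1 hk).1).trans_eq (div_eq_mul_inv _ _)
      _ ≤ C * (2 / (1 + 1)) := by
          rw [← Finset.mul_sum]
          exact mul_le_mul_of_nonneg_left (by exact_mod_cast sum_Ioo_inv_sq_le 1 n) hC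
      _ = C := by norm_num
  calc ∑ k ∈ range n, f k ≤ ∑ k ∈ range 2 ∪ Ioo 1 n, f k :=
        Finset.sum_le_sum_of_subset_of_nonneg hcover fun k _ _ => hf k
    _ = f 0 + f 1 + ∑ k ∈ Ioo 1 n, f k := by
        rw [Finset.sum_union hdisj, Finset.sum_range_succ, Finset.sum_range_one]
    _ ≤ 2 * b + C := by linarith [hsmall 0 zero_le_one, hsmall 1 le_rfl]

namespace Matrix

open scoped ComplexOrder

section RCLike

variable {n 𝕜 : Type*} [Fintype n] [DecidableEq n] [RCLike 𝕜]

theorem PosSemidef.sqrt_eq_cfc {A : Matrix n n 𝕜} (hA : A.PosSemidef) :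
    hA.sqrt = cfc Real.sqrt A := by
  rw [hA.1.cfc_eq, IsHermitian.cfc, Unitary.conjStarAlgAut_apply]
  rfl

theorem one_sub_smul_pow_eq_cfc {B : Matrix n n 𝕜} (hB : B.IsHermitian) (c : ℝ) (q : ℕ) :
    (1 - c • B) ^ q = cfc (fun x => (1 - c * x) ^ q) B := by
  have hB' : IsSelfAdjoint B := hB
  rw [cfc_pow _ _ B, cfc_sub _ _ B, cfc_const_one ℝ B, cfc_const_mul _ _ B, cfc_id' ℝ B]

theorem PosSemidef.sqrt_pow_one_sub_smul_mul_eq_cfc {B : Matrix n n 𝕜} (hB : B.IsHermitian)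
    {c : ℝ} {q : ℕ} (hA : ((1 - c • B) ^ q).PosSemidef) :
    hA.sqrt * B = cfc (fun x => √((1 - c * x) ^ q) * x) B := by
  have hB' : IsSelfAdjoint B := hB
  rw [hA.sqrt_eq_cfc, one_sub_smul_pow_eq_cfc hB, ← cfc_comp' Real.sqrt _ B, cfc_mul _ _ B,
    cfc_id' ℝ B]

end RCLike

variable {n : Type*} [Fintype n] [DecidableEq n] {B : Matrix n n ℝ}

theorem PosSemidef.mem_Icc_norm_of_mem_spectrum (hB : B.PosSemidef) {x : ℝ}
    (hx : x ∈ spectrum ℝ B) : x ∈ Set.Icc 0 ‖B‖ := by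
  have hB' : IsSelfAdjoint B := hB.1
  have hx_le : ‖x‖ ≤ ‖B‖ := by simpa [cfc_id ℝ B] using norm_apply_le_norm_cfc id B hx
  rw [hB.1.spectrum_real_eq_range_eigenvalues] at hx
  obtain ⟨i, rfl⟩ := hx
  exact ⟨hB.eigenvalues_nonneg i, (le_abs_self _).trans hx_le⟩

variable {c : ℝ} {q : ℕ}

theorem PosSemidef.norm_sqrt_pow_one_sub_smul_mul_le_norm (hB : B.PosSemidef) (hc : 0 ≤ c)
    (hcB : c * ‖B‖ ≤ 1) (hA : ((1 - c • B) ^ q).PosSemidef) : ‖hA.sqrt * B‖ ≤ ‖B‖ := by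
  rw [hA.sqrt_pow_one_sub_smul_mul_eq_cfc hB.1]
  refine norm_cfc_le (norm_nonneg B) fun x hx => ?_
  obtain ⟨hx₀, hxB⟩ := hB.mem_Icc_norm_of_mem_spectrum hx
  have hcx : c * x ≤ 1 := (mul_le_mul_of_nonneg_left hxB hc).trans hcB
  have hsqrt : √((1 - c * x) ^ q) ≤ 1 :=
    Real.sqrt_le_one.mpr (pow_le_one₀ (by linarith) (by nlinarith))
  rw [Real.norm_eq_abs, abs_of_nonneg (by positivity)]
  nlinarith

theorem PosSemidef.norm_sqrt_pow_one_sub_smul_mul_le (hB : B.PosSemidef) (hc : 0 < c)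
    (hcB : c * ‖B‖ ≤ 1) (hq : 0 < q) (hA : ((1 - c • B) ^ q).PosSemidef) :
    ‖hA.sqrt * B‖ ≤ 2 / (q * c) := by
  rw [hA.sqrt_pow_one_sub_smul_mul_eq_cfc hB.1]
  refine norm_cfc_le (by positivity) fun x hx => ?_
  obtain ⟨hx₀, hxB⟩ := hB.mem_Icc_norm_of_mem_spectrum hx
  have hcx : c * x ≤ 1 := (mul_le_mul_of_nonneg_left hxB hc.le).trans hcB
  rw [Real.norm_eq_abs, abs_of_nonneg (by positivity), le_div_iff₀ (by positivity)]
  linarith [nat_mul_mul_sqrt_one_sub_pow_le_two hcx q]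

end Matrix

/-- Let `B` be symmetric positive definite with `c₀‖B‖ ≤ 1` and `M₀ = I − c₀B`
(which is then positive semidefinite).  Then for every `K ≥ 0` and positive
integer `M`,
`Σ_{j=0}^{K} ‖M₀^{(K−j)M/2} B‖² ≤ (4 + 2(Mc₀‖B‖)²) c₀⁻² M⁻²`,
where `M₀^{q/2}` is the positive semidefinite square root of `M₀^q` and `‖·‖`
the spectral norm. -/
theorem sum_half_power_bound (m K M : ℕ) (hM : 0 < M)
    (B : Matrix (Fin m) (Fin m) ℝ) (hB : B.PosDef)
    (c₀ : ℝ) (hc₀ : 0 < c₀) (hnorm : c₀ * ‖B‖ ≤ 1)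
    (hM₀ : (1 - c₀ • B).PosSemidef) :
    ∑ j ∈ range (K + 1), ‖(hM₀.pow ((K - j) * M)).sqrt * B‖ ^ 2
      ≤ (4 + 2 * ((M : ℝ) * c₀ * ‖B‖) ^ 2) * (c₀ ^ 2)⁻¹ * (((M : ℝ)) ^ 2)⁻¹ := by
  set f : ℕ → ℝ := fun k => ‖(hM₀.pow (k * M)).sqrt * B‖ ^ 2
  have hsmall (k : ℕ) : f k ≤ ‖B‖ ^ 2 :=
    pow_le_pow_left₀ (norm_nonneg _)
      (hB.posSemidef.norm_sqrt_pow_one_sub_smul_mul_le_norm hc₀.le hnorm _) 2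
  have hlarge (k : ℕ) (hk : 2 ≤ k) : f k ≤ (2 / (M * c₀)) ^ 2 / k ^ 2 := by
    have hkM : 0 < k * M := Nat.mul_pos (by omega) hM
    have hbound :=
      hB.posSemidef.norm_sqrt_pow_one_sub_smul_mul_le hc₀ hnorm hkM (hM₀.pow (k * M))
    rw [← div_pow]
    refine pow_le_pow_left₀ (norm_nonneg _) (hbound.trans_eq ?_) 2
    push_cast
    field_simp
  calc ∑ j ∈ range (K + 1), f (K - j) = ∑ k ∈ range (K + 1), f k := by
        simpa using sum_range_reflect f (K + 1)
    _ ≤ 2 * ‖B‖ ^ 2 + (2 / (M * c₀)) ^ 2 :=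
        sum_range_le_two_mul_add_of_le_div_sq (fun k => by positivity) (fun k _ => hsmall k)
          hlarge (by positivity) _
    _ = (4 + 2 * ((M : ℝ) * c₀ * ‖B‖) ^ 2) * (c₀ ^ 2)⁻¹ * (((M : ℝ)) ^ 2)⁻¹ := by
        field_simp
        ring
end
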